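/- arXiv:2510.20081 — 4 statements merged into one kernel-verified Lean document; each statement's English description precedes it below -/
import Mathlib

section
/- Let α : ℝ → ℝ be a locally Lipschitz function with α(0) = 0 that is strictly increasing, and let y : [0,∞) → ℝ be differentiable with y(0) ≥ 0 and y'(t) ≥ -α(y(t)) for all t ≥ 0. Then y(t) ≥ 0 for all t ≥ 0. -/
open Set

/- A barrier at `-ε` cannot be crossed from above, since `y' > 0` wherever `y = -ε < 0`;
letting `ε → 0` gives `y ≥ 0`. -/
theorem nonneg_of_hasDerivWithinAt_pos_of_neg {y y' : ℝ → ℝ} {a : ℝ}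
    (hy : ∀ t ≥ a, HasDerivWithinAt y (y' t) (Ici a) t) (ha : 0 ≤ y a)
    (hpos : ∀ t ≥ a, y t < 0 → 0 < y' t) :
    ∀ t ≥ a, 0 ≤ y t := by
  intro t ht
  have hcont : ContinuousOn (-y) (Icc a t) := fun s hs =>
    ((hy s hs.1).continuousWithinAt.mono Icc_subset_Ici_self).neg
  refine le_of_forall_pos_le_add fun ε hε => ?_
  have barrier : ∀ s ∈ Icc a t, -y s ≤ ε :=
    image_le_of_deriv_right_lt_deriv_boundary' hcont
      (fun s hs => ((hy s hs.1).mono (Ici_subset_Ici.mpr hs.1)).neg)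
      (by simp only [Pi.neg_apply]; linarith) continuousOn_const
      (fun s _ => hasDerivWithinAt_const s _ ε)
      (fun s hs hsε => by
        have := hpos s hs.1 (by simp only [Pi.neg_apply] at hsε; linarith)
        linarith)
  linarith [barrier t ⟨ht, le_rfl⟩]

theorem stmt_0_general (α : ℝ → ℝ) (hα0 : α 0 = 0)
    (hα_mono : StrictMono α) (y y' : ℝ → ℝ)
    (hy_deriv : ∀ t ≥ (0 : ℝ), HasDerivWithinAt y (y' t) (Set.Ici 0) t)
    (hy0 : 0 ≤ y 0)
    (hy' : ∀ t ≥ (0 : ℝ), y' t ≥ -α (y t)) :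
    ∀ t ≥ (0 : ℝ), 0 ≤ y t := by
  refine nonneg_of_hasDerivWithinAt_pos_of_neg hy_deriv hy0 fun t ht hyt => ?_
  have hαyt : α (y t) < 0 := hα0 ▸ hα_mono hyt
  linarith [hy' t ht]

/-- Scalar comparison principle: if `y' t ≥ -α (y t)` with `α` locally Lipschitz,
strictly increasing, `α 0 = 0`, and `y 0 ≥ 0`, then `y` stays nonnegative. -/
theorem stmt_0 (α : ℝ → ℝ) (hα_lip : LocallyLipschitz α) (hα0 : α 0 = 0)
    (hα_mono : StrictMono α) (y y' : ℝ → ℝ)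
    (hy_deriv : ∀ t ≥ (0 : ℝ), HasDerivWithinAt y (y' t) (Set.Ici 0) t)
    (hy0 : 0 ≤ y 0)
    (hy' : ∀ t ≥ (0 : ℝ), y' t ≥ -α (y t)) :
    ∀ t ≥ (0 : ℝ), 0 ≤ y t :=
  stmt_0_general α hα0 hα_mono y y' hy_deriv hy0 hy'
end

section
/- Let f : ℝⁿ → ℝⁿ and g : ℝⁿ → ℝⁿˣᵐ be locally Lipschitz, let h : ℝⁿ → ℝ be continuously differentiable, let α : ℝ → ℝ be locally Lipschitz, strictly increasing with α(0) = 0, and let ε > 0. Let u : [0,∞) → ℝᵐ be piecewise continuous, let x : [0,∞) → ℝⁿ solve ẋ(t) = f(x(t)) + g(x(t))u(t), and let x̂ : [0,∞) → ℝⁿ be a function (a state estimate) satisfying ‖x(t) - x̂(t)‖ ≤ ε for all t ≥ 0. If for every t ≥ 0 the input satisfies the robust CBF condition ⟨∇h(z), f(z) + g(z)u(t)⟩ ≥ -α(h(z)) for all z in the closed ball B̄(x̂(t), ε), and if h(x(0)) ≥ 0, then h(x(t)) ≥ 0 for all t ≥ 0. -/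
attribute [local instance] Matrix.normedAddCommGroup

/-!
Along the true trajectory, `y t = h (x t)` has derivative `⟪∇h(x t), ẋ t⟫`. Since `x t` lies in the
ball of radius `ε` around `x̂ t`, the robust condition applies at `z = x t` and gives
`ẏ ≥ -α(y)`; as `α` is strictly increasing with `α 0 = 0`, `ẏ > 0` whenever `y < 0`. If `y` became
negative at some time `t`, then on the interval from the last earlier time `s₀` with `y s₀ ≥ 0`
up to `t` the function `y` would be strictly increasing, contradicting `y s₀ ≥ 0 > y t`.
-/

open Set InnerProductSpace

theorem HasGradientAt.comp_hasDerivAt {F : Type*} [NormedAddCommGroup F] [InnerProductSpace ℝ F]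
    [CompleteSpace F] {h : F → ℝ} {γ : ℝ → F} {g v : F} {t : ℝ}
    (hh : HasGradientAt h g (γ t)) (hγ : HasDerivAt γ v t) :
    HasDerivAt (h ∘ γ) (inner ℝ g v) t := by
  simpa only [toDual_apply_apply] using hh.hasFDerivAt.comp_hasDerivAt t hγ

theorem ContinuousOn.nonneg_of_deriv_pos_of_neg {y : ℝ → ℝ} {a b : ℝ} (hab : a ≤ b)
    (hy : ContinuousOn y (Icc a b)) (ha : 0 ≤ y a)
    (hderiv : ∀ s ∈ Ioo a b, y s < 0 → 0 < deriv y s) : 0 ≤ y b := by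
  by_contra! hb
  set A := Icc a b ∩ y ⁻¹' Ici 0
  have hA_closed : IsClosed A := hy.preimage_isClosed_of_isClosed isClosed_Icc isClosed_Ici
  have hA_bdd : BddAbove A := ⟨b, fun s hs => hs.1.2⟩
  obtain ⟨⟨hs₀a, hs₀b⟩, hys₀ : 0 ≤ y (sSup A)⟩ : sSup A ∈ A :=
    hA_closed.csSup_mem ⟨a, ⟨le_rfl, hab⟩, ha⟩ hA_bdd
  set s₀ := sSup A
  have hs₀b' : s₀ < b := hs₀b.lt_of_ne fun he => (he ▸ hys₀).not_gt hb
  have hneg_after : ∀ s ∈ Ioc s₀ b, y s < 0 := fun s ⟨hs₀s, hsb⟩ => by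
    by_contra! hys
    exact (le_csSup hA_bdd ⟨⟨hs₀a.trans hs₀s.le, hsb⟩, hys⟩).not_gt hs₀s
  have hmono : StrictMonoOn y (Icc s₀ b) := by
    refine strictMonoOn_of_deriv_pos (convex_Icc s₀ b) (hy.mono (Icc_subset_Icc_left hs₀a)) ?_
    rw [interior_Icc]
    exact fun s hs => hderiv s ⟨hs₀a.trans_lt hs.1, hs.2⟩ (hneg_after s (Ioo_subset_Ioc_self hs))
  linarith [hmono (left_mem_Icc.2 hs₀b) (right_mem_Icc.2 hs₀b) hs₀b']

theorem stmt_2_general {n m : ℕ}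
    (f : EuclideanSpace ℝ (Fin n) → EuclideanSpace ℝ (Fin n))
    (g : EuclideanSpace ℝ (Fin n) → Matrix (Fin n) (Fin m) ℝ)
    (h : EuclideanSpace ℝ (Fin n) → ℝ) (hh : ContDiff ℝ 1 h)
    (α : ℝ → ℝ) (hα_mono : StrictMono α)
    (hα0 : α 0 = 0)
    (ε : ℝ)
    (u : ℝ → Fin m → ℝ)
    (x xhat : ℝ → EuclideanSpace ℝ (Fin n))
    (hx : ∀ t ≥ (0 : ℝ), HasDerivWithinAt x
      (f (x t) + (EuclideanSpace.equiv (Fin n) ℝ).symm ((g (x t)).mulVec (u t)))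
      (Set.Ici 0) t)
    (hest : ∀ t ≥ (0 : ℝ), ‖x t - xhat t‖ ≤ ε)
    (hcbf : ∀ t ≥ (0 : ℝ), ∀ z ∈ Metric.closedBall (xhat t) ε,
      @inner ℝ _ _ (gradient h z)
        (f z + (EuclideanSpace.equiv (Fin n) ℝ).symm ((g z).mulVec (u t)))
        ≥ -α (h z))
    (hx0 : 0 ≤ h (x 0)) :
    ∀ t ≥ (0 : ℝ), 0 ≤ h (x t) := by
  intro t ht
  have hh_grad : ∀ z, HasGradientAt h (gradient h z) z :=
    fun z => (hh.differentiable one_ne_zero z).hasGradientAt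
  refine ContinuousOn.nonneg_of_deriv_pos_of_neg (y := h ∘ x) ht (fun s hs => ?_) hx0 fun s hs hneg => ?_
  · exact (hh_grad _).continuousAt.comp_continuousWithinAt
      ((hx s hs.1).continuousWithinAt.mono Icc_subset_Ici_self)
  · have hs0 : 0 ≤ s := hs.1.le
    have hx_mem : x s ∈ Metric.closedBall (xhat s) ε := by
      simpa only [Metric.mem_closedBall, dist_eq_norm] using hest s hs0
    have hα_neg : α (h (x s)) < 0 := hα0 ▸ hα_mono hneg
    rw [((hh_grad (x s)).comp_hasDerivAt ((hx s hs0).hasDerivAt (Ici_mem_nhds hs.1))).deriv]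
    linarith [hcbf s hs0 (x s) hx_mem]

/-- Robust safety under bounded state-estimation error: if the robust CBF condition
holds on the ball of radius `ε` around the estimate `xhat t`, and the estimation error
is bounded by `ε`, then `h (x t) ≥ 0` is maintained. -/
theorem stmt_2 {n m : ℕ}
    (f : EuclideanSpace ℝ (Fin n) → EuclideanSpace ℝ (Fin n))
    (g : EuclideanSpace ℝ (Fin n) → Matrix (Fin n) (Fin m) ℝ)
    (hf_lip : LocallyLipschitz f) (hg_lip : LocallyLipschitz g)
    (h : EuclideanSpace ℝ (Fin n) → ℝ) (hh : ContDiff ℝ 1 h)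
    (α : ℝ → ℝ) (hα_lip : LocallyLipschitz α) (hα_mono : StrictMono α)
    (hα0 : α 0 = 0)
    (ε : ℝ) (hε : 0 < ε)
    (u : ℝ → Fin m → ℝ)
    -- piecewise continuity of the input
    (hu_pc : ∃ D : Set ℝ, D.Countable ∧ ∀ t ∉ D, ContinuousAt u t)
    (x xhat : ℝ → EuclideanSpace ℝ (Fin n))
    (hx : ∀ t ≥ (0 : ℝ), HasDerivWithinAt x
      (f (x t) + (EuclideanSpace.equiv (Fin n) ℝ).symm ((g (x t)).mulVec (u t)))
      (Set.Ici 0) t)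
    (hest : ∀ t ≥ (0 : ℝ), ‖x t - xhat t‖ ≤ ε)
    (hcbf : ∀ t ≥ (0 : ℝ), ∀ z ∈ Metric.closedBall (xhat t) ε,
      @inner ℝ _ _ (gradient h z)
        (f z + (EuclideanSpace.equiv (Fin n) ℝ).symm ((g z).mulVec (u t)))
        ≥ -α (h z))
    (hx0 : 0 ≤ h (x 0)) :
    ∀ t ≥ (0 : ℝ), 0 ≤ h (x t) :=
  stmt_2_general f g h hh α hα_mono hα0 ε u x xhat hx hest hcbf hx0
end

section
/- Let h : ℝⁿ → ℝ be continuously differentiable, f : ℝⁿ → ℝⁿ, g : ℝⁿ → ℝⁿˣᵐ, α : ℝ → ℝ, and fix x̂ ∈ ℝⁿ and ε > 0. Suppose F ∈ ℝ and G⁻, G⁺ ∈ ℝᵐ satisfy F ≤ ⟨∇h(z), f(z)⟩ + α(h(z)) and G⁻ᵢ ≤ [∇h(z)g(z)]ᵢ ≤ G⁺ᵢ for every z ∈ B̄(x̂, ε) and every i ∈ {1,…,m}. Then any u ∈ ℝᵐ satisfying F + Σᵢ min(G⁻ᵢuᵢ, G⁺ᵢuᵢ) ≥ 0 also satisfies ⟨∇h(z),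 f(z) + g(z)u⟩ ≥ -α(h(z)) for every z ∈ B̄(x̂, ε). -/
open Matrix

theorem min_mul_le_mul_of_le_of_le {R : Type*} [Ring R] [LinearOrder R] [IsOrderedRing R]
    {a b c : R} (u : R) (hac : a ≤ c) (hcb : c ≤ b) : min (a * u) (b * u) ≤ c * u := by
  rcases le_total 0 u with hu | hu
  · exact (min_le_left _ _).trans (mul_le_mul_of_nonneg_right hac hu)
  · exact (min_le_right _ _).trans (mul_le_mul_of_nonpos_right hcb hu)

theorem sum_min_mul_le_dotProduct {R ι : Type*} [Ring R] [LinearOrder R] [IsOrderedRing R]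
    [Fintype ι] {lower upper v : ι → R} (hv : ∀ i, lower i ≤ v i ∧ v i ≤ upper i) (u : ι → R) :
    ∑ i, min (lower i * u i) (upper i * u i) ≤ v ⬝ᵥ u :=
  Finset.sum_le_sum fun i _ => min_mul_le_mul_of_le_of_le (u i) (hv i).1 (hv i).2

theorem EuclideanSpace.inner_equiv_symm_mulVec {ι κ : Type*} [Fintype ι] [Fintype κ]
    (v : EuclideanSpace ℝ ι) (A : Matrix ι κ ℝ) (w : κ → ℝ) :
    inner ℝ v ((EuclideanSpace.equiv ι ℝ).symm (A *ᵥ w))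
      = EuclideanSpace.equiv ι ℝ v ᵥ* A ⬝ᵥ w := by
  rw [EuclideanSpace.inner_eq_star_dotProduct, star_trivial, dotProduct_comm]
  exact Matrix.dotProduct_mulVec _ A w

theorem stmt_4_general {n m : ℕ}
    (h : EuclideanSpace ℝ (Fin n) → ℝ)
    (f : EuclideanSpace ℝ (Fin n) → EuclideanSpace ℝ (Fin n))
    (g : EuclideanSpace ℝ (Fin n) → Matrix (Fin n) (Fin m) ℝ)
    (α : ℝ → ℝ)
    (xhat : EuclideanSpace ℝ (Fin n)) (ε : ℝ)
    (F : ℝ) (Gminus Gplus : Fin m → ℝ)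
    (hF : ∀ z ∈ Metric.closedBall xhat ε,
      F ≤ @inner ℝ _ _ (gradient h z) (f z) + α (h z))
    (hG : ∀ z ∈ Metric.closedBall xhat ε, ∀ i,
      Gminus i ≤ Matrix.vecMul (EuclideanSpace.equiv (Fin n) ℝ (gradient h z)) (g z) i ∧
      Matrix.vecMul (EuclideanSpace.equiv (Fin n) ℝ (gradient h z)) (g z) i ≤ Gplus i)
    (u : Fin m → ℝ)
    (hu : 0 ≤ F + ∑ i, min (Gminus i * u i) (Gplus i * u i)) :
    ∀ z ∈ Metric.closedBall xhat ε,
      @inner ℝ _ _ (gradient h z)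
        (f z + (EuclideanSpace.equiv (Fin n) ℝ).symm ((g z).mulVec u)) ≥ -α (h z) := by
  intro z hz
  rw [inner_add_right, EuclideanSpace.inner_equiv_symm_mulVec]
  linarith [hF z hz, sum_min_mul_le_dotProduct (hG z hz) u]

/-- The nonsmooth QP constraint `F + ∑ i, min (G⁻ᵢ uᵢ) (G⁺ᵢ uᵢ) ≥ 0` implies the
CBF inequality at every point of the uncertainty ball `B̄(x̂, ε)`. -/
theorem stmt_4 {n m : ℕ}
    (h : EuclideanSpace ℝ (Fin n) → ℝ) (hh : ContDiff ℝ 1 h)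
    (f : EuclideanSpace ℝ (Fin n) → EuclideanSpace ℝ (Fin n))
    (g : EuclideanSpace ℝ (Fin n) → Matrix (Fin n) (Fin m) ℝ)
    (α : ℝ → ℝ)
    (xhat : EuclideanSpace ℝ (Fin n)) (ε : ℝ) (hε : 0 < ε)
    (F : ℝ) (Gminus Gplus : Fin m → ℝ)
    (hF : ∀ z ∈ Metric.closedBall xhat ε,
      F ≤ @inner ℝ _ _ (gradient h z) (f z) + α (h z))
    (hG : ∀ z ∈ Metric.closedBall xhat ε, ∀ i,
      Gminus i ≤ Matrix.vecMul (EuclideanSpace.equiv (Fin n) ℝ (gradient h z)) (g z) i ∧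
      Matrix.vecMul (EuclideanSpace.equiv (Fin n) ℝ (gradient h z)) (g z) i ≤ Gplus i)
    (u : Fin m → ℝ)
    (hu : 0 ≤ F + ∑ i, min (Gminus i * u i) (Gplus i * u i)) :
    ∀ z ∈ Metric.closedBall xhat ε,
      @inner ℝ _ _ (gradient h z)
        (f z + (EuclideanSpace.equiv (Fin n) ℝ).symm ((g z).mulVec u)) ≥ -α (h z) :=
  stmt_4_general h f g α xhat ε F Gminus Gplus hF hG u hu
end

section
/- Let n, m, L ∈ ℕ, let x ∈ ℝⁿ, let f : ℝⁿ → ℝⁿ, g : ℝⁿ → ℝⁿˣᵐ, Q : ℝⁿ → ℝ, let R ∈ ℝᵐˣᵐ be symmetric positive definite, let σ : ℝⁿ → ℝ^L and ε : ℝⁿ → ℝ be continuously differentiable, and let W, Ŵ_c, Ŵ_a ∈ ℝ^L. Define G_R := g(x)R⁻¹g(x)ᵀ, G_σ := ∇σ(x) G_R ∇σ(x)ᵀ, û := -½ R⁻¹ g(x)ᵀ ∇σ(x)ᵀ Ŵ_a, ω := ∇σ(x)(f(x) + g(x)û), and δ̂ := Ŵ_cᵀ ∇σ(x)(f(x) +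 g(x)û) + Q(x) + ûᵀ R û. Suppose the function V*(z) = Wᵀσ(z) + ε(z) satisfies the closed-loop HJB equation at x: ∇V*(x) f(x) - ¼ ∇V*(x) G_R ∇V*(x)ᵀ + Q(x) = 0. Then δ̂ = -ωᵀ(W - Ŵ_c) + ¼ (W - Ŵ_a)ᵀ G_σ (W - Ŵ_a) + Δ, where Δ := ½ Wᵀ ∇σ(x) G_R ∇ε(x)ᵀ + ¼ ∇ε(x) G_R ∇ε(x)ᵀ - ∇ε(x) f(x). -/
/-!
Everything reduces to vectors in `ℝⁿ`: with `a = ∇σᵀŴ_a` and `G_R = gR⁻¹gᵀ`, the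
actor gives `gû = -½ G_R a` and, because `R R⁻¹ = 1`, the control cost `ûᵀRû = ¼ aᵀG_R a`.
Eliminating `Q(x)` with the HJB equation leaves a polynomial identity in the bilinear form of
`G_R`, which holds because `G_R` is symmetric (as `R` is).
-/

open Matrix

namespace Matrix

variable {ι κ α : Type*}

theorem isSymm_mul_inv_mul_transpose [CommRing α] [Fintype κ] [DecidableEq κ]
    (B : Matrix ι κ α) {R : Matrix κ κ α} (hR : R.IsSymm) : (B * R⁻¹ * Bᵀ).IsSymm := by
  simp only [IsSymm, transpose_mul, transpose_transpose, transpose_nonsing_inv, hR.eq,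
    Matrix.mul_assoc]

variable [Fintype ι] [Fintype κ]

theorem IsSymm.dotProduct_mulVec_comm [CommSemiring α] {G : Matrix ι ι α} (hG : G.IsSymm)
    (v w : ι → α) : v ⬝ᵥ G *ᵥ w = w ⬝ᵥ G *ᵥ v := by
  simpa only [hG.eq] using dotProduct_transpose_mulVec G v w

theorem dotProduct_mul_mul_transpose_mulVec [CommSemiring α] (A : Matrix ι κ α)
    (G : Matrix κ κ α) (v w : ι → α) :
    v ⬝ᵥ (A * G * Aᵀ) *ᵥ w = (v ᵥ* A) ⬝ᵥ G *ᵥ (w ᵥ* A) := by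
  rw [← mulVec_mulVec, ← mulVec_mulVec, dotProduct_mulVec, mulVec_transpose]

variable [CommRing α] [DecidableEq κ]

theorem mulVec_smul_inv_mulVec_transpose_mulVec (B : Matrix ι κ α) (R : Matrix κ κ α) (c : α)
    (v : ι → α) : B *ᵥ (c • R⁻¹ *ᵥ (Bᵀ *ᵥ v)) = c • (B * R⁻¹ * Bᵀ) *ᵥ v := by
  rw [mulVec_smul, mulVec_mulVec, mulVec_mulVec]

theorem smul_inv_mulVec_transpose_mulVec_dotProduct {R : Matrix κ κ α} (hR : IsUnit R.det)
    (B : Matrix ι κ α) (c : α) (v : ι → α) :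
    (c • R⁻¹ *ᵥ (Bᵀ *ᵥ v)) ⬝ᵥ R *ᵥ (c • R⁻¹ *ᵥ (Bᵀ *ᵥ v)) =
      c ^ 2 * (v ⬝ᵥ (B * R⁻¹ * Bᵀ) *ᵥ v) := by
  have hRu : R *ᵥ (c • R⁻¹ *ᵥ (Bᵀ *ᵥ v)) = c • Bᵀ *ᵥ v := by
    rw [mulVec_smul, mulVec_mulVec, mul_nonsing_inv R hR, one_mulVec]
  rw [hRu, smul_dotProduct, dotProduct_smul, dotProduct_transpose_mulVec, mulVec_mulVec,
    mulVec_mulVec, smul_eq_mul, smul_eq_mul]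
  ring

end Matrix

/-- The identity in reduced variables: `p = ∇σᵀW`, `c = ∇σᵀŴ_c`, `a = ∇σᵀŴ_a`, `e = ∇ε`, and
`F - ½ G a` is the closed-loop drift `f + gû`. -/
theorem bellmanError_eq_of_hjb {ι : Type*} [Fintype ι] {G : Matrix ι ι ℝ} (hG : G.IsSymm)
    (p c a e F : ι → ℝ) (q : ℝ)
    (hjb : (p + e) ⬝ᵥ F - 1 / 4 * ((p + e) ⬝ᵥ G *ᵥ (p + e)) + q = 0) :
    c ⬝ᵥ (F + -(1 / 2 : ℝ) • G *ᵥ a) + q + 1 / 4 * (a ⬝ᵥ G *ᵥ a) =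
      -((p - c) ⬝ᵥ (F + -(1 / 2 : ℝ) • G *ᵥ a)) + 1 / 4 * ((p - a) ⬝ᵥ G *ᵥ (p - a)) +
        (1 / 2 * (p ⬝ᵥ G *ᵥ e) + 1 / 4 * (e ⬝ᵥ G *ᵥ e) - e ⬝ᵥ F) := by
  simp only [add_dotProduct, sub_dotProduct, dotProduct_add, dotProduct_sub, dotProduct_smul,
    mulVec_add, mulVec_sub, smul_eq_mul] at hjb ⊢
  rw [hG.dotProduct_mulVec_comm e p] at hjb
  rw [hG.dotProduct_mulVec_comm a p]
  linear_combination hjb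

theorem stmt_16_general {n m L : ℕ} (x : Fin n → ℝ)
    (f : (Fin n → ℝ) → Fin n → ℝ)
    (g : (Fin n → ℝ) → Matrix (Fin n) (Fin m) ℝ)
    (Q : (Fin n → ℝ) → ℝ)
    (R : Matrix (Fin m) (Fin m) ℝ) (hR : R.PosDef)
    (σ : (Fin n → ℝ) → Fin L → ℝ) (ε : (Fin n → ℝ) → ℝ)
    (W Wc Wa : Fin L → ℝ) :
    -- Jacobian `∇σ(x)` and gradient `∇ε(x)`
    let Dσ : Matrix (Fin L) (Fin n) ℝ :=
      Matrix.of fun i j => fderiv ℝ (fun z => σ z i) x (Pi.single j 1)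
    let Dε : Fin n → ℝ := fun j => fderiv ℝ ε x (Pi.single j 1)
    let GR : Matrix (Fin n) (Fin n) ℝ := g x * R⁻¹ * (g x).transpose
    let Gσ : Matrix (Fin L) (Fin L) ℝ := Dσ * GR * Dσ.transpose
    let uhat : Fin m → ℝ :=
      -(1 / 2 : ℝ) • R⁻¹.mulVec ((g x).transpose.mulVec (Dσ.transpose.mulVec Wa))
    let ω : Fin L → ℝ := Dσ.mulVec (f x + (g x).mulVec uhat)
    let δhat : ℝ := Wc ⬝ᵥ ω + Q x + uhat ⬝ᵥ R.mulVec uhat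
    -- gradient of `V* = Wᵀσ + ε` at `x`
    let gradV : Fin n → ℝ := Matrix.vecMul W Dσ + Dε
    -- closed-loop HJB equation at `x`
    gradV ⬝ᵥ f x - (1 / 4 : ℝ) * (gradV ⬝ᵥ GR.mulVec gradV) + Q x = 0 →
    δhat = -(ω ⬝ᵥ (W - Wc)) + (1 / 4 : ℝ) * ((W - Wa) ⬝ᵥ Gσ.mulVec (W - Wa)) +
      ((1 / 2 : ℝ) * (W ⬝ᵥ Dσ.mulVec (GR.mulVec Dε)) +
        (1 / 4 : ℝ) * (Dε ⬝ᵥ GR.mulVec Dε) - Dε ⬝ᵥ f x) := by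
  intro Dσ Dε GR Gσ uhat ω δhat gradV hjb
  have hGR : GR.IsSymm := isSymm_mul_inv_mul_transpose (g x) hR.isHermitian
  have hgu : g x *ᵥ uhat = -(1 / 2 : ℝ) • GR *ᵥ (Wa ᵥ* Dσ) := by
    rw [← mulVec_transpose]
    exact mulVec_smul_inv_mulVec_transpose_mulVec (g x) R _ _
  have hcost : uhat ⬝ᵥ R *ᵥ uhat = 1 / 4 * ((Wa ᵥ* Dσ) ⬝ᵥ GR *ᵥ (Wa ᵥ* Dσ)) := by
    rw [← mulVec_transpose, smul_inv_mulVec_transpose_mulVec_dotProduct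
      ((isUnit_iff_isUnit_det R).mp hR.isUnit)]
    norm_num only
    rfl
  have hω (v : Fin L → ℝ) : v ⬝ᵥ ω = (v ᵥ* Dσ) ⬝ᵥ (f x + -(1 / 2 : ℝ) • GR *ᵥ (Wa ᵥ* Dσ)) := by
    rw [dotProduct_mulVec, hgu]
  change Wc ⬝ᵥ ω + Q x + uhat ⬝ᵥ R *ᵥ uhat = _
  rw [hω, hcost, dotProduct_comm ω, hω, dotProduct_mul_mul_transpose_mulVec Dσ GR,
    dotProduct_mulVec W Dσ, sub_vecMul, sub_vecMul]
  exact bellmanError_eq_of_hjb hGR _ _ _ _ _ _ hjb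

/-- Bellman-error identity: substituting the actor–critic approximations into the
HJB equation, the Bellman error `δ̂` equals `-ωᵀW̃_c + ¼ W̃_aᵀ G_σ W̃_a + Δ`,
where `W̃_c = W - Ŵ_c`, `W̃_a = W - Ŵ_a`, and `Δ` depends only on the ideal
weights and the reconstruction error. -/
theorem stmt_16 {n m L : ℕ} (x : Fin n → ℝ)
    (f : (Fin n → ℝ) → Fin n → ℝ)
    (g : (Fin n → ℝ) → Matrix (Fin n) (Fin m) ℝ)
    (Q : (Fin n → ℝ) → ℝ)
    (R : Matrix (Fin m) (Fin m) ℝ) (hR : R.PosDef)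
    (σ : (Fin n → ℝ) → Fin L → ℝ) (ε : (Fin n → ℝ) → ℝ)
    (hσ : ContDiff ℝ 1 σ) (hε : ContDiff ℝ 1 ε)
    (W Wc Wa : Fin L → ℝ) :
    -- Jacobian `∇σ(x)` and gradient `∇ε(x)`
    let Dσ : Matrix (Fin L) (Fin n) ℝ :=
      Matrix.of fun i j => fderiv ℝ (fun z => σ z i) x (Pi.single j 1)
    let Dε : Fin n → ℝ := fun j => fderiv ℝ ε x (Pi.single j 1)
    let GR : Matrix (Fin n) (Fin n) ℝ := g x * R⁻¹ * (g x).transpose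
    let Gσ : Matrix (Fin L) (Fin L) ℝ := Dσ * GR * Dσ.transpose
    let uhat : Fin m → ℝ :=
      -(1 / 2 : ℝ) • R⁻¹.mulVec ((g x).transpose.mulVec (Dσ.transpose.mulVec Wa))
    let ω : Fin L → ℝ := Dσ.mulVec (f x + (g x).mulVec uhat)
    let δhat : ℝ := Wc ⬝ᵥ ω + Q x + uhat ⬝ᵥ R.mulVec uhat
    -- gradient of `V* = Wᵀσ + ε` at `x`
    let gradV : Fin n → ℝ := Matrix.vecMul W Dσ + Dε
    -- closed-loop HJB equation at `x`
    gradV ⬝ᵥ f x - (1 / 4 : ℝ) * (gradV ⬝ᵥ GR.mulVec gradV) + Q x = 0 →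
    δhat = -(ω ⬝ᵥ (W - Wc)) + (1 / 4 : ℝ) * ((W - Wa) ⬝ᵥ Gσ.mulVec (W - Wa)) +
      ((1 / 2 : ℝ) * (W ⬝ᵥ Dσ.mulVec (GR.mulVec Dε)) +
        (1 / 4 : ℝ) * (Dε ⬝ᵥ GR.mulVec Dε) - Dε ⬝ᵥ f x) :=
  stmt_16_general x f g Q R hR σ ε W Wc Wa
end
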